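/- For all a, b ∈ ℂ, the polynomial identity (F₁(X) + 2X·F₁′(X))·F₂(X) − 2X·F₁(X)·F₂′(X) = F₃(X)·F₄(X) holds in ℂ[X]. Consequently, at every point x with F₂(x) ≠ 0, the derivative of φ(X) = X·F₁(X)²/F₂(X)² satisfies φ′(x) = F₁(x)·F₃(x)·F₄(x)/F₂(x)³. -/

import Mathlib

open Polynomial

/-- `F₁(X) = X² + (2a + 2b + a²)X + 2ab + b²` as a polynomial over `ℂ`. -/
noncomputable def F₁ (a b : ℂ) : Polynomial ℂ :=
  X ^ 2 + C (2 * a + 2 * b + a ^ 2) * X + C (2 * a * b + b ^ 2)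

/-- `F₂(X) = (2a+1)X² + (a² + 2ab + 2b)X + b²` as a polynomial over `ℂ`. -/
noncomputable def F₂ (a b : ℂ) : Polynomial ℂ :=
  C (2 * a + 1) * X ^ 2 + C (a ^ 2 + 2 * a * b + 2 * b) * X + C (b ^ 2)

/-- `F₃(X) = X² − (a² − 2b)X + b²` as a polynomial over `ℂ`. -/
noncomputable def F₃ (a b : ℂ) : Polynomial ℂ :=
  X ^ 2 - C (a ^ 2 - 2 * b) * X + C (b ^ 2)

/-- `F₄(X) = (2a+1)X² + (2b − 2ab − 2a − a²)X + b² + 2ab` as a polynomial over `ℂ`. -/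
noncomputable def F₄ (a b : ℂ) : Polynomial ℂ :=
  C (2 * a + 1) * X ^ 2 + C (2 * b - 2 * a * b - 2 * a - a ^ 2) * X + C (b ^ 2 + 2 * a * b)

/-!
By the quotient rule, `(X·f²/g²)′ = f·((f + 2X·f′)·g − 2X·f·g′)/g³` for any polynomials `f, g`,
after cancelling a common factor `f·g`. For `f = F₁`, `g = F₂` the bracket expands to `F₃·F₄`.
-/

theorem Polynomial.hasDerivAt_mul_sq_div_sq {𝕜 : Type*} [NontriviallyNormedField 𝕜]
    (f g : 𝕜[X]) {x : 𝕜} (hx : g.eval x ≠ 0) :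
    HasDerivAt (fun t => t * f.eval t ^ 2 / g.eval t ^ 2)
      (f.eval x * ((f + 2 * X * derivative f) * g - 2 * X * f * derivative g).eval x
        / g.eval x ^ 3) x := by
  refine (hasDerivAt_id' x |>.fun_mul ((f.hasDerivAt x).fun_pow 2) |>.fun_div
    ((g.hasDerivAt x).fun_pow 2) (pow_ne_zero 2 hx)).congr_deriv ?_
  simp only [eval_sub, eval_mul, eval_add, eval_ofNat, eval_X]
  field_simp
  ring

theorem derivative_combination_F₁_F₂_eq_F₃_mul_F₄ (a b : ℂ) :
    (F₁ a b + 2 * X * derivative (F₁ a b)) * F₂ a b - 2 * X * F₁ a b * derivative (F₂ a b) =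
      F₃ a b * F₄ a b := by
  refine Polynomial.funext fun x => ?_
  simp only [F₁, F₂, F₃, F₄, derivative_add, derivative_mul, derivative_C, derivative_X,
    derivative_pow, eval_add, eval_sub, eval_mul, eval_pow, eval_C, eval_X,
    eval_ofNat, eval_one, eval_zero]
  ring

/-- For all `a, b ∈ ℂ`, the identity
`(F₁ + 2X·F₁′)·F₂ − 2X·F₁·F₂′ = F₃·F₄` holds in `ℂ[X]`, and consequently at every
`x` with `F₂(x) ≠ 0` the derivative of `φ(X) = X·F₁(X)²/F₂(X)²` is
`φ′(x) = F₁(x)·F₃(x)·F₄(x)/F₂(x)³`. -/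
theorem derivative_factorization (a b : ℂ) :
    ((F₁ a b + 2 * X * derivative (F₁ a b)) * F₂ a b
        - 2 * X * F₁ a b * derivative (F₂ a b) = F₃ a b * F₄ a b) ∧
    ∀ x : ℂ, (F₂ a b).eval x ≠ 0 →
      HasDerivAt (fun t : ℂ => t * ((F₁ a b).eval t) ^ 2 / ((F₂ a b).eval t) ^ 2)
        ((F₁ a b).eval x * (F₃ a b).eval x * (F₄ a b).eval x / ((F₂ a b).eval x) ^ 3) x := by
  refine ⟨derivative_combination_F₁_F₂_eq_F₃_mul_F₄ a b, fun x hx => ?_⟩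
  have h := (F₁ a b).hasDerivAt_mul_sq_div_sq (F₂ a b) hx
  rwa [derivative_combination_F₁_F₂_eq_F₃_mul_F₄, eval_mul, ← mul_assoc] at h
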